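/- arXiv:2507.02889 — 2 statements merged into one kernel-verified Lean document; each statement's English description precedes it below -/
import Mathlib

section
/- Let α > 0, β > 0, λ ∈ ℝ, and let s > 0 be a real number with |λ| < s^α. Then ∫₀^∞ e^{−st} · (∑_{k=0}^∞ λ^k · t^{αk+β−1} · (ln t − ψ(αk+β)) / Γ(αk+β)) dt = − s^{α−β} · ln s / (s^α − λ). (The integrand series is the term-by-term derivative with respect to β of t^{β−1} E_{α,β}(λ t^α).) -/
/-!
For `c > 0`, the substitution `u = s t` turns the Gamma-derivative integral
`Γ'(c) = ∫ u^(c-1) log u e^(-u) du` into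
`∫ e^(-st) t^(c-1) log t dt = s^(-c) (Γ'(c) - Γ(c) log s)`, so with `ψ = Γ'/Γ` the
Laplace transform of `t^(c-1) (log t - ψ(c)) / Γ(c)` is `-s^(-c) log s`. Taking
`c = α k + β` and weight `λ^k`, the terms sum to the geometric series
`-log s · s^(-β) ∑ (λ / s^α)^k`.

Integrating term by term is legitimate because the `L¹` norms of the terms are summable:
`|log t| ≤ (t^ε + t^(-ε)) / ε` reduces them to Gamma values `Γ(c ± ε) s^(-(c ± ε))`,
and convexity of `Γ` gives `Γ(c ± ε) ≤ (1 + c) Γ(c) / ε` once `2ε ≤ c`, `ε ≤ 1`.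
The `k`-th norm is thus `O((1 + α k) (|λ| / s^α)^k)`.
-/

open Real MeasureTheory

/-- The digamma function `ψ(x) = the logarithmic derivative of Γ`, i.e. the derivative of `log ∘ Γ`. -/
noncomputable def digamma (x : ℝ) : ℝ := deriv (fun y : ℝ => Real.log (Real.Gamma y)) x

open Set

lemma abs_log_le_rpow_add_rpow_neg_div {t ε : ℝ} (ht : 0 < t) (hε : 0 < ε) :
    |log t| ≤ (t ^ ε + t ^ (-ε)) / ε := by
  have hpos := log_le_rpow_div ht.le hε
  have hneg := log_le_rpow_div (inv_pos.2 ht).le hε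
  rw [log_inv, inv_rpow ht.le, ← rpow_neg ht.le] at hneg
  rw [abs_le, add_div]
  constructor <;>
    linarith [div_pos (rpow_pos_of_pos ht ε) hε, div_pos (rpow_pos_of_pos ht (-ε)) hε]

lemma exp_neg_mul_mul_rpow_mul_abs_log_le {s t c ε : ℝ} (ht : 0 < t) (hε : 0 < ε) :
    exp (-(s * t)) * t ^ (c - 1) * |log t|
      ≤ (exp (-(s * t)) * t ^ (c + ε - 1) + exp (-(s * t)) * t ^ (c - ε - 1)) / ε := by
  calc exp (-(s * t)) * t ^ (c - 1) * |log t|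
      ≤ exp (-(s * t)) * t ^ (c - 1) * ((t ^ ε + t ^ (-ε)) / ε) := by
        gcongr; exact abs_log_le_rpow_add_rpow_neg_div ht hε
    _ = _ := by
        rw [show c + ε - 1 = (c - 1) + ε by ring, show c - ε - 1 = (c - 1) + -ε by ring,
          rpow_add ht, rpow_add ht]
        ring

lemma Gamma_add_le {c δ : ℝ} (hc : 0 < c) (hδ0 : 0 ≤ δ) (hδ1 : δ ≤ 1) :
    Gamma (c + δ) ≤ (1 + c) * Gamma c := by
  have hmem : c + δ ∈ segment ℝ c (c + 1) := by
    rw [segment_eq_Icc (by linarith)]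
    exact ⟨by linarith, by linarith⟩
  have hΓ := Gamma_pos_of_pos hc
  refine (convexOn_Gamma.le_on_segment hc (by simp only [mem_Ioi]; linarith) hmem).trans ?_
  rw [Gamma_add_one hc.ne']
  exact max_le (by nlinarith) (by nlinarith)

lemma Gamma_sub_le {c ε : ℝ} (hε0 : 0 < ε) (hε1 : ε ≤ 1) (hεc : ε < c) :
    Gamma (c - ε) ≤ (1 + c) * Gamma c / (c - ε) := by
  have hcε : 0 < c - ε := by linarith
  rw [le_div_iff₀ hcε, mul_comm, ← Gamma_add_one hcε.ne',
    show c - ε + 1 = c + (1 - ε) by ring]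
  exact Gamma_add_le (by linarith) (by linarith) (by linarith)

lemma hasDerivAt_Gamma_integral {c : ℝ} (hc : 0 < c) :
    HasDerivAt Gamma (∫ t in Ioi 0, t ^ (c - 1) * (log t * exp (-t))) c := by
  have hc' : 0 < (c : ℂ).re := by simpa using hc
  have hΓ : Complex.Gamma =ᶠ[nhds (c : ℂ)] Complex.GammaIntegral := by
    filter_upwards [(isOpen_Ioi.preimage Complex.continuous_re).mem_nhds hc'] with z hz
    exact Complex.Gamma_eq_integral hz
  have h := ((Complex.hasDerivAt_GammaIntegral hc').congr_of_eventuallyEq hΓ).real_of_complex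
  have hderiv : ∫ t : ℝ in Ioi 0, (t : ℂ) ^ ((c : ℂ) - 1) * (log t * exp (-t))
      = ((∫ t in Ioi 0, t ^ (c - 1) * (log t * exp (-t)) : ℝ) : ℂ) := by
    rw [← integral_complex_ofReal]
    refine setIntegral_congr_fun measurableSet_Ioi fun t (ht : 0 < t) => ?_
    push_cast
    rw [Complex.ofReal_cpow ht.le]
    push_cast
    ring
  simpa only [hderiv, Complex.Gamma_ofReal, Complex.ofReal_re] using h

lemma digamma_eq_deriv_Gamma_div {c : ℝ} (hc : 0 < c) : digamma c = deriv Gamma c / Gamma c :=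
  ((hasDerivAt_Gamma_integral hc).differentiableAt.hasDerivAt.log
    (Gamma_pos_of_pos hc).ne').deriv

section Laplace

variable {s c ε : ℝ}

lemma integrableOn_exp_neg_mul_mul_rpow (hs : 0 < s) (hc : 0 < c) :
    IntegrableOn (fun t => exp (-(s * t)) * t ^ (c - 1)) (Ioi 0) := by
  refine (integrableOn_rpow_mul_exp_neg_mul_rpow (s := c - 1) (by linarith) one_pos hs
    ).congr_fun (fun t _ => ?_) measurableSet_Ioi
  simp only [rpow_one, neg_mul]
  ring

lemma integral_exp_neg_mul_mul_rpow (hs : 0 < s) (hc : 0 < c) :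
    ∫ t in Ioi 0, exp (-(s * t)) * t ^ (c - 1) = Gamma c * s ^ (-c) := by
  simp_rw [mul_comm (exp _)]
  rw [integral_rpow_mul_exp_neg_mul_Ioi hc hs, one_div, inv_rpow hs.le, rpow_neg hs.le, mul_comm]

lemma integrableOn_exp_neg_mul_mul_rpow_mul_log (hs : 0 < s) (hc : 0 < c) :
    IntegrableOn (fun t => exp (-(s * t)) * t ^ (c - 1) * log t) (Ioi 0) := by
  have hε : 0 < c / 2 := by positivity
  have hdom := ((integrableOn_exp_neg_mul_mul_rpow hs (c := c + c / 2) (by linarith)).add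
    (integrableOn_exp_neg_mul_mul_rpow hs (c := c - c / 2) (by linarith))).div_const (c / 2)
  refine hdom.mono' ?_ ?_
  · refine ContinuousOn.aestronglyMeasurable
      (fun t (ht : 0 < t) => ContinuousAt.continuousWithinAt ?_) measurableSet_Ioi
    fun_prop (disch := simp [ne_of_gt ht])
  · filter_upwards [ae_restrict_mem measurableSet_Ioi] with t (ht : 0 < t)
    rw [norm_mul, norm_of_nonneg (by positivity), norm_eq_abs]
    exact exp_neg_mul_mul_rpow_mul_abs_log_le ht hε

lemma integral_exp_neg_mul_mul_rpow_mul_abs_log_le (hs : 0 < s) (hε : 0 < ε)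
    (hεc : ε < c) :
    ∫ t in Ioi 0, exp (-(s * t)) * t ^ (c - 1) * |log t|
      ≤ (Gamma (c + ε) * s ^ (-(c + ε)) + Gamma (c - ε) * s ^ (-(c - ε))) / ε := by
  have hplus := integrableOn_exp_neg_mul_mul_rpow hs (c := c + ε) (by linarith)
  have hminus := integrableOn_exp_neg_mul_mul_rpow hs (c := c - ε) (by linarith)
  have habs : IntegrableOn (fun t => exp (-(s * t)) * t ^ (c - 1) * |log t|) (Ioi 0) := by
    refine IntegrableOn.congr_fun (integrableOn_exp_neg_mul_mul_rpow_mul_log hs (by linarith)).abs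
      (fun t (ht : 0 < t) => ?_) measurableSet_Ioi
    rw [abs_mul, abs_of_nonneg (by positivity)]
  calc ∫ t in Ioi 0, exp (-(s * t)) * t ^ (c - 1) * |log t|
      ≤ ∫ t in Ioi 0,
          (exp (-(s * t)) * t ^ (c + ε - 1) + exp (-(s * t)) * t ^ (c - ε - 1)) / ε :=
        setIntegral_mono_on habs ((hplus.add hminus).div_const ε) measurableSet_Ioi
          fun t ht => exp_neg_mul_mul_rpow_mul_abs_log_le ht hε
    _ = _ := by
        rw [integral_div, integral_add hplus hminus, integral_exp_neg_mul_mul_rpow hs (by linarith),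
          integral_exp_neg_mul_mul_rpow hs (by linarith)]

lemma integral_exp_neg_mul_mul_rpow_mul_abs_log_le_Gamma (hs : 0 < s) (hε0 : 0 < ε)
    (hε1 : ε ≤ 1) (hεc : 2 * ε ≤ c) :
    ∫ t in Ioi 0, exp (-(s * t)) * t ^ (c - 1) * |log t|
      ≤ (1 + c) * Gamma c / ε ^ 2 * (s ^ ε + s ^ (-ε)) * s ^ (-c) := by
  have hc : 0 < c := by linarith
  have hM : 0 ≤ (1 + c) * Gamma c := by have := Gamma_pos_of_pos hc; positivity
  have hplus : Gamma (c + ε) ≤ (1 + c) * Gamma c / ε := by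
    refine (Gamma_add_le hc hε0.le hε1).trans ?_
    rw [le_div_iff₀ hε0]
    nlinarith
  have hminus : Gamma (c - ε) ≤ (1 + c) * Gamma c / ε :=
    (Gamma_sub_le hε0 hε1 (by linarith)).trans (div_le_div_of_nonneg_left hM hε0 (by linarith))
  refine (integral_exp_neg_mul_mul_rpow_mul_abs_log_le hs hε0 (by linarith)).trans ?_
  have hsplus : s ^ (-(c + ε)) = s ^ (-c) * s ^ (-ε) := by rw [← rpow_add hs]; ring_nf
  have hsminus : s ^ (-(c - ε)) = s ^ (-c) * s ^ ε := by rw [← rpow_add hs]; ring_nf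
  rw [hsplus, hsminus]
  have := rpow_pos_of_pos hs (-c)
  have := rpow_pos_of_pos hs ε
  have := rpow_pos_of_pos hs (-ε)
  calc (Gamma (c + ε) * (s ^ (-c) * s ^ (-ε)) + Gamma (c - ε) * (s ^ (-c) * s ^ ε)) / ε
      ≤ ((1 + c) * Gamma c / ε * (s ^ (-c) * s ^ (-ε))
          + (1 + c) * Gamma c / ε * (s ^ (-c) * s ^ ε)) / ε := by gcongr
    _ = _ := by field_simp; ring

lemma integral_exp_neg_mul_mul_rpow_mul_log (hs : 0 < s) (hc : 0 < c) :
    ∫ t in Ioi 0, exp (-(s * t)) * t ^ (c - 1) * log t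
      = (deriv Gamma c - Gamma c * log s) * s ^ (-c) := by
  set g : ℝ → ℝ := fun u => u ^ (c - 1) * (log u * exp (-u))
  have hg : IntegrableOn g (Ioi 0) :=
    (integrableOn_exp_neg_mul_mul_rpow_mul_log one_pos hc).congr_fun
      (fun t _ => by simp only [g, one_mul]; ring) measurableSet_Ioi
  have hg_comp : IntegrableOn (fun t => g (s * t)) (Ioi 0) :=
    (integrableOn_Ioi_comp_mul_left_iff g 0 hs).2 (by rwa [mul_zero])
  have hsubst : ∀ t ∈ Ioi (0 : ℝ), exp (-(s * t)) * t ^ (c - 1) * log t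
      = s ^ (1 - c) * g (s * t) - log s * (exp (-(s * t)) * t ^ (c - 1)) := by
    intro t (ht : 0 < t)
    have hs1 : s ^ (1 - c) * s ^ (c - 1) = 1 := by rw [← rpow_add hs]; norm_num
    simp only [g]
    rw [mul_rpow hs.le ht.le, log_mul hs.ne' ht.ne']
    linear_combination (-(t ^ (c - 1) * ((log s + log t) * exp (-(s * t))))) * hs1
  have hGamma : ∫ u in Ioi 0, g u = deriv Gamma c := (hasDerivAt_Gamma_integral hc).deriv.symm
  have hs_inv : s ^ (1 - c) * s⁻¹ = s ^ (-c) := by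
    rw [← rpow_neg_one s, ← rpow_add hs]; ring_nf
  rw [setIntegral_congr_fun measurableSet_Ioi hsubst,
    integral_sub (hg_comp.const_mul _) ((integrableOn_exp_neg_mul_mul_rpow hs hc).const_mul _),
    integral_const_mul, integral_const_mul, integral_exp_neg_mul_mul_rpow hs hc]
  have hscale := integral_comp_mul_left_Ioi g 0 hs
  rw [mul_zero, smul_eq_mul, hGamma] at hscale
  rw [hscale]
  linear_combination deriv Gamma c * hs_inv

lemma abs_deriv_Gamma_le (hε0 : 0 < ε) (hε1 : ε ≤ 1) (hεc : 2 * ε ≤ c) :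
    |deriv Gamma c| ≤ 2 * (1 + c) * Gamma c / ε ^ 2 := by
  have hc : 0 < c := by linarith
  have hbound := integral_exp_neg_mul_mul_rpow_mul_abs_log_le_Gamma one_pos hε0 hε1 hεc
  rw [one_rpow, one_rpow, one_rpow] at hbound
  calc |deriv Gamma c| ≤ ∫ t in Ioi 0, ‖t ^ (c - 1) * (log t * exp (-t))‖ := by
        rw [(hasDerivAt_Gamma_integral hc).deriv, ← norm_eq_abs]
        exact norm_integral_le_integral_norm _
    _ = ∫ t in Ioi 0, exp (-(1 * t)) * t ^ (c - 1) * |log t| := by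
        refine setIntegral_congr_fun measurableSet_Ioi fun t (ht : 0 < t) => ?_
        rw [norm_mul, norm_mul, norm_of_nonneg (rpow_nonneg ht.le _), norm_of_nonneg (exp_pos _).le,
          norm_eq_abs, one_mul]
        ring
    _ ≤ 2 * (1 + c) * Gamma c / ε ^ 2 := hbound.trans_eq (by ring)

/-- `∂/∂c (A t^(c-1) / Γ(c))`. -/
noncomputable def logTerm (A c t : ℝ) : ℝ := A * t ^ (c - 1) * (log t - digamma c) / Gamma c

lemma exp_neg_mul_mul_logTerm (A t : ℝ) :
    exp (-(s * t)) * logTerm A c t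
      = A / Gamma c * (exp (-(s * t)) * t ^ (c - 1) * log t)
        - A * digamma c / Gamma c * (exp (-(s * t)) * t ^ (c - 1)) := by
  rw [logTerm]; ring

lemma integrableOn_exp_neg_mul_mul_logTerm (A : ℝ) (hs : 0 < s) (hc : 0 < c) :
    IntegrableOn (fun t => exp (-(s * t)) * logTerm A c t) (Ioi 0) := by
  simp_rw [exp_neg_mul_mul_logTerm]
  exact ((integrableOn_exp_neg_mul_mul_rpow_mul_log hs hc).const_mul _).sub
    ((integrableOn_exp_neg_mul_mul_rpow hs hc).const_mul _)

lemma integral_exp_neg_mul_mul_logTerm (A : ℝ) (hs : 0 < s) (hc : 0 < c) :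
    ∫ t in Ioi 0, exp (-(s * t)) * logTerm A c t = -(A * log s * s ^ (-c)) := by
  have hΓ := Gamma_pos_of_pos hc
  simp_rw [exp_neg_mul_mul_logTerm]
  rw [integral_sub ((integrableOn_exp_neg_mul_mul_rpow_mul_log hs hc).const_mul _)
      ((integrableOn_exp_neg_mul_mul_rpow hs hc).const_mul _),
    integral_const_mul, integral_const_mul, integral_exp_neg_mul_mul_rpow_mul_log hs hc,
    integral_exp_neg_mul_mul_rpow hs hc, digamma_eq_deriv_Gamma_div hc]
  field_simp
  ring

lemma integral_norm_exp_neg_mul_mul_logTerm_le (A : ℝ) (hs : 0 < s) (hε0 : 0 < ε)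
    (hε1 : ε ≤ 1) (hεc : 2 * ε ≤ c) :
    ∫ t in Ioi 0, ‖exp (-(s * t)) * logTerm A c t‖
      ≤ |A| * s ^ (-c) * ((1 + c) * (s ^ ε + s ^ (-ε) + 2) / ε ^ 2) := by
  have hc : 0 < c := by linarith
  have hΓ := Gamma_pos_of_pos hc
  have hlog := integrableOn_exp_neg_mul_mul_rpow_mul_log hs hc
  have habslog : IntegrableOn (fun t => exp (-(s * t)) * t ^ (c - 1) * |log t|) (Ioi 0) := by
    refine IntegrableOn.congr_fun hlog.abs (fun t (ht : 0 < t) => ?_) measurableSet_Ioi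
    rw [abs_mul, abs_of_nonneg (by positivity)]
  have hpow := integrableOn_exp_neg_mul_mul_rpow hs hc
  have hpointwise : ∀ t ∈ Ioi (0 : ℝ), ‖exp (-(s * t)) * logTerm A c t‖
      ≤ |A| / Gamma c * (exp (-(s * t)) * t ^ (c - 1) * |log t|)
        + |A| * |digamma c| / Gamma c * (exp (-(s * t)) * t ^ (c - 1)) := by
    intro t (ht : 0 < t)
    have hnorm : ‖exp (-(s * t)) * logTerm A c t‖
        = |A| / Gamma c * (exp (-(s * t)) * t ^ (c - 1)) * |log t - digamma c| := by
      rw [logTerm, norm_eq_abs, abs_mul, abs_div, abs_mul, abs_mul, abs_of_pos (exp_pos _),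
        abs_of_nonneg (rpow_nonneg ht.le _), abs_of_pos hΓ]
      ring
    rw [hnorm]
    calc |A| / Gamma c * (exp (-(s * t)) * t ^ (c - 1)) * |log t - digamma c|
        ≤ |A| / Gamma c * (exp (-(s * t)) * t ^ (c - 1)) * (|log t| + |digamma c|) := by
          gcongr; exact abs_sub _ _
      _ = _ := by ring
  have hderiv : |digamma c| * Gamma c = |deriv Gamma c| := by
    rw [digamma_eq_deriv_Gamma_div hc, abs_div, abs_of_pos hΓ, div_mul_cancel₀ _ hΓ.ne']
  refine (setIntegral_mono_on (integrableOn_exp_neg_mul_mul_logTerm A hs hc).norm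
    ((habslog.const_mul _).add (hpow.const_mul _)) measurableSet_Ioi hpointwise).trans ?_
  simp only [Pi.add_apply]
  rw [integral_add (habslog.const_mul _) (hpow.const_mul _), integral_const_mul,
    integral_const_mul, integral_exp_neg_mul_mul_rpow hs hc]
  have hL := integral_exp_neg_mul_mul_rpow_mul_abs_log_le_Gamma hs hε0 hε1 hεc
  have hD := abs_deriv_Gamma_le hε0 hε1 hεc
  have := rpow_pos_of_pos hs (-c)
  calc |A| / Gamma c * (∫ t in Ioi 0, exp (-(s * t)) * t ^ (c - 1) * |log t|)
        + |A| * |digamma c| / Gamma c * (Gamma c * s ^ (-c))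
      = |A| / Gamma c * ((∫ t in Ioi 0, exp (-(s * t)) * t ^ (c - 1) * |log t|)
        + |deriv Gamma c| * s ^ (-c)) := by rw [← hderiv]; ring
    _ ≤ |A| / Gamma c * ((1 + c) * Gamma c / ε ^ 2 * (s ^ ε + s ^ (-ε)) * s ^ (-c)
        + 2 * (1 + c) * Gamma c / ε ^ 2 * s ^ (-c)) := by gcongr
    _ = |A| * s ^ (-c) * ((1 + c) * (s ^ ε + s ^ (-ε) + 2) / ε ^ 2) := by field_simp

end Laplace

lemma pow_mul_rpow_neg_mul_add {s : ℝ} (hs : 0 < s) (x α β : ℝ) (k : ℕ) :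
    x ^ k * s ^ (-(α * k + β)) = s ^ (-β) * (x / s ^ α) ^ k := by
  rw [neg_add, rpow_add hs, neg_mul_eq_mul_neg, rpow_mul hs.le, rpow_neg (rpow_nonneg hs.le α),
    rpow_natCast, div_pow]
  ring

theorem laplace_deriv_beta_ML (α β lam s : ℝ) (hα : 0 < α) (hβ : 0 < β) (hs : 0 < s)
    (hlam : |lam| < s ^ α) :
    (∫ t in Set.Ioi (0 : ℝ), Real.exp (-(s * t)) *
        ∑' k : ℕ, lam ^ k * t ^ (α * k + β - 1) *
          (Real.log t - digamma (α * k + β)) / Real.Gamma (α * k + β))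
      = -(s ^ (α - β) * Real.log s / (s ^ α - lam)) := by
  have hsα : 0 < s ^ α := rpow_pos_of_pos hs α
  set ε := min β 1 / 2 with hε
  have hε0 : 0 < ε := by positivity
  have hε1 : ε ≤ 1 := by linarith [min_le_right β 1, hε]
  have hc : ∀ k : ℕ, 2 * ε ≤ α * k + β := fun k => by
    linarith [min_le_left β 1, hε, mul_nonneg hα.le k.cast_nonneg]
  have hc0 : ∀ k : ℕ, 0 < α * k + β := fun k => by positivity
  have hr : ‖|lam| / s ^ α‖ < 1 := by
    rwa [norm_eq_abs, abs_div, abs_abs, abs_of_pos hsα, div_lt_one hsα]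
  have hq : ‖lam / s ^ α‖ < 1 := by
    rwa [norm_eq_abs, abs_div, abs_of_pos hsα, div_lt_one hsα]
  have hsummable : Summable fun k : ℕ =>
      ∫ t in Ioi 0, ‖exp (-(s * t)) * logTerm (lam ^ k) (α * k + β) t‖ := by
    set C := s ^ (-β) * ((s ^ ε + s ^ (-ε) + 2) / ε ^ 2)
    refine Summable.of_nonneg_of_le (fun k => integral_nonneg fun _ => norm_nonneg _)
      (fun k => integral_norm_exp_neg_mul_mul_logTerm_le (lam ^ k) hs hε0 hε1 (hc k))
      (((summable_geometric_of_norm_lt_one hr).mul_left ((1 + β) * C)).add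
        ((summable_pow_mul_geometric_of_norm_lt_one 1 hr).mul_left (α * C)) |>.congr fun k => ?_)
    rw [abs_pow, pow_mul_rpow_neg_mul_add hs]
    ring
  calc ∫ t in Ioi 0, exp (-(s * t)) * ∑' k : ℕ, logTerm (lam ^ k) (α * k + β) t
      = ∫ t in Ioi 0, ∑' k : ℕ, exp (-(s * t)) * logTerm (lam ^ k) (α * k + β) t := by
        simp_rw [tsum_mul_left]
    _ = ∑' k : ℕ, ∫ t in Ioi 0, exp (-(s * t)) * logTerm (lam ^ k) (α * k + β) t :=
        (integral_tsum_of_summable_integral_norm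
          (fun k => integrableOn_exp_neg_mul_mul_logTerm _ hs (hc0 k)) hsummable).symm
    _ = ∑' k : ℕ, -(log s * s ^ (-β)) * (lam / s ^ α) ^ k := by
        refine tsum_congr fun k => ?_
        rw [integral_exp_neg_mul_mul_logTerm _ hs (hc0 k), mul_assoc, mul_left_comm,
          pow_mul_rpow_neg_mul_add hs]
        ring
    _ = -(s ^ (α - β) * log s / (s ^ α - lam)) := by
        have hden : s ^ α - lam ≠ 0 := by linarith [le_abs_self lam]
        rw [tsum_mul_left, tsum_geometric_of_norm_lt_one hq, sub_eq_add_neg α, rpow_add hs]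
        field_simp
end

section
/- Let α > 1, β > 0, and let s > 0 be a real number. Then ∫₀^∞ e^{−st} · (∑_{k=0}^∞ (− ψ(αk+β) / Γ(αk+β)) · t^k) dt = − ∑_{k=0}^∞ (k! · ψ(αk+β) / Γ(αk+β)) · s^{−k−1}. (The integrand series is the term-by-term derivative with respect to β of the Mittag-Leffler function E_{α,β}(t), and both the integral and the right-hand series converge since α > 1.) -/
/-!
Integrate term by term: `∫₀^∞ tᵏ e^{-st} dt = k! s^{-k-1}`, and the interchange of sum and
integral is justified once `∑ |ψ(xₖ)| / Γ(xₖ) · k! s^{-k-1}` converges, where `xₖ = αk + β`.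
Log-convexity of `Γ` gives both `|ψ(x)| ≤ x` for `x ≥ 2` and `Γ(x + α) ≥ Γ(x) x^α`, so the
ratio of consecutive terms of this majorant is `O(xₖ^{1-α})`, which tends to `0` as `α > 1`.
-/

open Real MeasureTheory

open Set Filter
open scoped Nat

lemma differentiableAt_log_Gamma {x : ℝ} (hx : 0 < x) :
    DifferentiableAt ℝ (log ∘ Gamma) x :=
  (differentiableAt_Gamma fun m => ((neg_nonpos.2 m.cast_nonneg).trans_lt hx).ne').log
    (Gamma_pos_of_pos hx).ne'

lemma slope_log_Gamma_self_add_one {x : ℝ} (hx : 0 < x) :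
    slope (log ∘ Gamma) x (x + 1) = log x := by
  simp only [slope_def_field, Function.comp_apply, Gamma_add_one hx.ne',
    log_mul hx.ne' (Gamma_pos_of_pos hx).ne']
  ring

lemma digamma_le_log {x : ℝ} (hx : 0 < x) : digamma x ≤ log x :=
  slope_log_Gamma_self_add_one hx ▸ convexOn_log_Gamma.deriv_le_slope hx
    (by simp only [mem_Ioi]; linarith) (lt_add_one x) (differentiableAt_log_Gamma hx)

lemma log_le_digamma_add_one {x : ℝ} (hx : 0 < x) : log x ≤ digamma (x + 1) :=
  slope_log_Gamma_self_add_one hx ▸ convexOn_log_Gamma.slope_le_deriv hx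
    (by simp only [mem_Ioi]; linarith) (lt_add_one x) (differentiableAt_log_Gamma (by linarith))

lemma abs_digamma_le_self {x : ℝ} (hx : 2 ≤ x) : |digamma x| ≤ x := by
  have upper := digamma_le_log (x := x) (by linarith)
  have lower := log_le_digamma_add_one (x := x - 1) (by linarith)
  rw [sub_add_cancel] at lower
  have := log_nonneg (x := x - 1) (by linarith)
  have := log_le_sub_one_of_pos (x := x) (by linarith)
  exact abs_le.2 ⟨by linarith, by linarith⟩

/-- The supporting line of the convex function `log ∘ Γ` at `x + 1` has slope `ψ(x + 1) ≥ log x`. -/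
lemma Gamma_mul_rpow_le_Gamma_add {x a : ℝ} (hx : 0 < x) (ha : 1 ≤ a) :
    Gamma x * x ^ a ≤ Gamma (x + a) := by
  rcases ha.eq_or_lt with rfl | ha
  · rw [rpow_one, Gamma_add_one hx.ne', mul_comm]
  have tangent : log (Gamma (x + 1)) + (a - 1) * digamma (x + 1) ≤ log (Gamma (x + a)) := by
    have h := convexOn_log_Gamma.deriv_le_slope (x := x + 1) (y := x + a)
      (by simp only [mem_Ioi]; linarith) (by simp only [mem_Ioi]; linarith) (by linarith)
      (differentiableAt_log_Gamma (by linarith))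
    rw [slope_def_field, le_div_iff₀ (by linarith)] at h
    change digamma (x + 1) * _ ≤ log (Gamma _) - log (Gamma _) at h
    linarith
  have hψ := mul_le_mul_of_nonneg_left (log_le_digamma_add_one hx) (sub_nonneg.2 ha.le)
  have hΓ := Gamma_pos_of_pos hx
  rw [Gamma_add_one hx.ne', log_mul hx.ne' hΓ.ne'] at tangent
  rw [← log_le_log_iff (by positivity) (Gamma_pos_of_pos (by linarith)),
    log_mul hΓ.ne' (rpow_pos_of_pos hx a).ne', log_rpow hx]
  linarith

lemma integrableOn_pow_mul_exp_neg_mul_Ioi (k : ℕ) {s : ℝ} (hs : 0 < s) :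
    IntegrableOn (fun t : ℝ => t ^ k * exp (-(s * t))) (Ioi 0) :=
  (integrableOn_rpow_mul_exp_neg_mul_rpow (s := k) (p := 1)
    (by linarith [k.cast_nonneg (α := ℝ)]) one_pos hs).congr_fun (fun t _ => by simp [rpow_natCast]) measurableSet_Ioi

lemma integral_pow_mul_exp_neg_mul_Ioi (k : ℕ) {s : ℝ} (hs : 0 < s) :
    ∫ t in Ioi (0 : ℝ), t ^ k * exp (-(s * t)) = k ! * s ^ (-(k : ℝ) - 1) := by
  have h := integral_rpow_mul_exp_neg_mul_Ioi (a := k + 1) (by positivity) hs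
  simp_rw [add_sub_cancel_right, rpow_natCast] at h
  rw [h, Gamma_nat_eq_factorial, one_div, inv_rpow hs.le, ← rpow_neg hs.le, mul_comm]
  ring_nf

theorem integral_exp_neg_mul_mul_tsum_pow {c : ℕ → ℝ} {s : ℝ} (hs : 0 < s)
    (hc : Summable fun k => |c k| * (k ! * s ^ (-(k : ℝ) - 1))) :
    ∫ t in Ioi (0 : ℝ), exp (-(s * t)) * ∑' k, c k * t ^ k =
      ∑' k, c k * (k ! * s ^ (-(k : ℝ) - 1)) := by
  have term k : (fun t : ℝ => c k * (t ^ k * exp (-(s * t)))) =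
      fun t => exp (-(s * t)) * (c k * t ^ k) := by
    ext t; ring
  have hint k : IntegrableOn (fun t : ℝ => exp (-(s * t)) * (c k * t ^ k)) (Ioi 0) :=
    term k ▸ (integrableOn_pow_mul_exp_neg_mul_Ioi k hs).const_mul (c k)
  have hnorm k : ∫ t in Ioi (0 : ℝ), ‖exp (-(s * t)) * (c k * t ^ k)‖ =
      |c k| * (k ! * s ^ (-(k : ℝ) - 1)) := by
    rw [← integral_pow_mul_exp_neg_mul_Ioi k hs, ← integral_const_mul]
    refine setIntegral_congr_fun measurableSet_Ioi fun t (ht : 0 < t) => ?_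
    rw [norm_mul, norm_mul, norm_pow, norm_of_nonneg (exp_pos _).le, norm_of_nonneg ht.le,
      Real.norm_eq_abs]
    ring
  simp_rw [← tsum_mul_left]
  rw [← integral_tsum_of_summable_integral_norm hint (by simpa only [hnorm] using hc)]
  congr with k
  rw [← term, integral_const_mul, integral_pow_mul_exp_neg_mul_Ioi k hs]

lemma tendsto_mul_natCast_add_atTop {a : ℝ} (ha : 0 < a) (b : ℝ) :
    Tendsto (fun k : ℕ => a * k + b) atTop atTop :=
  tendsto_atTop_add_const_right _ b (tendsto_natCast_atTop_atTop.const_mul_atTop ha)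

/-- Ratio test: the `(k+1)`-st over the `k`-th term is at most `4 |r| / (αk+β)^(α-1)`,
by `Γ(x + α) ≥ Γ(x) x^α`. -/
theorem summable_mul_factorial_mul_pow_div_Gamma {α : ℝ} (hα : 1 < α) (β r : ℝ) :
    Summable fun k : ℕ => (α * k + β) * k ! * r ^ k / Gamma (α * k + β) := by
  have hx := tendsto_mul_natCast_add_atTop (zero_lt_one.trans hα) β
  refine summable_of_ratio_norm_eventually_le (r := 1 / 2) (by norm_num) ?_
  filter_upwards [hx.eventually_ge_atTop α,
    (tendsto_mul_natCast_add_atTop (sub_pos.2 hα) β).eventually_ge_atTop 1,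
    ((tendsto_rpow_atTop (sub_pos.2 hα)).comp hx).eventually_ge_atTop (8 * |r|)]
    with k hαx hβk hpow
  have hk : (k : ℝ) + 1 ≤ α * k + β := by linarith
  set x := α * k + β
  have hx0 : 0 < x := by linarith
  have hΓ := Gamma_mul_rpow_le_Gamma_add hx0 hα.le
  have hxα : x ^ α = x ^ (α - 1) * x := by
    rw [← rpow_add_one hx0.ne', sub_add_cancel]
  have hsucc : α * ((k + 1 : ℕ) : ℝ) + β = x + α := by push_cast; ring
  simp only [hsucc, Nat.factorial_succ, norm_div, norm_mul, norm_pow, Real.norm_eq_abs,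
    abs_of_pos hx0, abs_of_pos (Gamma_pos_of_pos hx0), abs_of_pos (by linarith : 0 < x + α),
    abs_of_pos (Gamma_pos_of_pos (by linarith : 0 < x + α)), Nat.abs_cast]
  push_cast
  set u := x ^ (α - 1)
  have hu : 8 * |r| ≤ u := hpow
  have key : (x + α) * (k + 1) * |r| ≤ x / 2 * (u * x) := by
    have : (x + α) * (k + 1) ≤ 2 * x * (2 * x) :=
      mul_le_mul (by linarith) (by linarith) (by positivity) (by positivity)
    nlinarith [abs_nonneg r]
  calc (x + α) * ((k + 1) * k !) * |r| ^ (k + 1) / Gamma (x + α)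
      ≤ (x + α) * ((k + 1) * k !) * |r| ^ (k + 1) / (Gamma x * (u * x)) := by
        rw [← hxα]
        gcongr
    _ = (x + α) * (k + 1) * |r| / (u * x) * (k ! * |r| ^ k / Gamma x) := by
        have : 0 < u := rpow_pos_of_pos hx0 _
        have := Gamma_pos_of_pos hx0
        field_simp
        ring
    _ ≤ x / 2 * (k ! * |r| ^ k / Gamma x) := by
        refine mul_le_mul_of_nonneg_right ?_ (by positivity)
        rwa [div_le_iff₀ (mul_pos (rpow_pos_of_pos hx0 _) hx0)]
    _ = 1 / 2 * (x * k ! * |r| ^ k / Gamma x) := by ring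

theorem summable_abs_digamma_div_Gamma_mul_factorial_mul_rpow {α β s : ℝ} (hα : 1 < α)
    (hs : 0 < s) :
    Summable fun k : ℕ =>
      |digamma (α * k + β) / Gamma (α * k + β)| * (k ! * s ^ (-(k : ℝ) - 1)) := by
  refine ((summable_mul_factorial_mul_pow_div_Gamma hα β s⁻¹).mul_right s⁻¹)
    |>.of_norm_bounded_eventually_nat ?_
  filter_upwards [(tendsto_mul_natCast_add_atTop (zero_lt_one.trans hα) β).eventually_ge_atTop 2]
    with k hx
  have hΓ := Gamma_pos_of_pos (by linarith : 0 < α * k + β)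
  have hrpow : s ^ (-(k : ℝ) - 1) = s⁻¹ ^ k * s⁻¹ := by
    rw [rpow_sub hs, rpow_one, rpow_neg hs.le, rpow_natCast, inv_pow, div_eq_mul_inv]
  rw [norm_of_nonneg (by positivity), abs_div, abs_of_pos hΓ, hrpow]
  calc |digamma (α * k + β)| / Gamma (α * k + β) * (k ! * (s⁻¹ ^ k * s⁻¹))
      ≤ (α * k + β) / Gamma (α * k + β) * (k ! * (s⁻¹ ^ k * s⁻¹)) := by
        gcongr
        exact abs_digamma_le_self hx
    _ = _ := by ring

theorem laplace_deriv_beta_ML_pure_general (α β s : ℝ) (hα : 1 < α) (hs : 0 < s) :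
    (∫ t in Set.Ioi (0 : ℝ), Real.exp (-(s * t)) *
        ∑' k : ℕ, (-(digamma (α * k + β) / Real.Gamma (α * k + β))) * t ^ k)
      = -∑' k : ℕ, ((k.factorial : ℝ) * digamma (α * k + β) / Real.Gamma (α * k + β)) *
          s ^ (-(k : ℝ) - 1) := by
  rw [integral_exp_neg_mul_mul_tsum_pow hs (by simpa only [abs_neg] using
    summable_abs_digamma_div_Gamma_mul_factorial_mul_rpow hα hs), ← tsum_neg]
  congr with k
  ring

theorem laplace_deriv_beta_ML_pure (α β s : ℝ) (hα : 1 < α) (hβ : 0 < β) (hs : 0 < s) :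
    (∫ t in Set.Ioi (0 : ℝ), Real.exp (-(s * t)) *
        ∑' k : ℕ, (-(digamma (α * k + β) / Real.Gamma (α * k + β))) * t ^ k)
      = -∑' k : ℕ, ((k.factorial : ℝ) * digamma (α * k + β) / Real.Gamma (α * k + β)) *
          s ^ (-(k : ℝ) - 1) :=
  laplace_deriv_beta_ML_pure_general α β s hα hs
end
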